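/- (SAC-based joint actor gradient, exact on-policy combination, Proposition 3 first equation.) In the multi-agent setup, fix agent i, ψ₀ⁱ ∈ Ψⁱ, real constants α, α₁, α₂, fixed real-valued functions Q₁(o,a), Q₂(o,a), tg(o,a), B(o,a^{∖i}) independent of ψⁱ (with B independent of agent i's action), and set δ_k(o,a) = Q_k(o,a) − tg(o,a) for k = 1,2. Define J(ψⁱ) = ∑_{s,o,a} d(s)E(o|s)(∏_j πʲ(aʲ|oʲ))·[α₁(Q₁(o,a) − α·log πⁱ_{ψⁱ}(aⁱ|oⁱ) − B(o,a^{∖i})) + α₂(δ₁(o,a)² + δ₂(o,a)²)]. Then the Fréchet derivative of J at ψ₀ⁱ equals ∑_{s,o,a} d(s)E(o|s)(∏_j πʲ(aʲ|oʲ))·D_{ψⁱ}(log πⁱ_{ψⁱ}(aⁱ|oⁱ))|_{ψ₀ⁱ}·[α₁(Q₁ − α·log πⁱ_{ψ₀ⁱ}(aⁱ|oⁱ) − B) + α₂(δ₁² + δ₂²)]. -/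

import Mathlib

/-!
Each `(s, o, a)` term has the form `c · πⁱ(ψⁱ) · (R − β log πⁱ(ψⁱ))`, where `c` collects the
weights and the other agents' policies and `β = α₁α`. Since `πⁱ · D log πⁱ = Dπⁱ`, its derivative
is `c πⁱ (R − β log πⁱ) · D log πⁱ − cβ · Dπⁱ`: the claimed score-function term plus an entropy
correction. The correction sums to zero over agent `i`'s action, because `c` does not depend on it
and `∑ Dπⁱ = D (∑ πⁱ) = D 1 = 0`.
-/

open Finset

theorem Fintype.prod_apply_update {ι M : Type*} [Fintype ι] [DecidableEq ι] [CommMonoid M]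
    {Ψ : ι → Type*} (F : ∀ j, Ψ j → M) (ψ : ∀ j, Ψ j) (i : ι) (x : Ψ i) :
    ∏ j, F j (Function.update ψ i x j) = F i x * ∏ j ∈ univ.erase i, F j (ψ j) := by
  simp_rw [Function.apply_update F ψ i x]
  rw [prod_update_of_mem (mem_univ i), sdiff_singleton_eq_erase]

theorem Fintype.sum_smul_apply_eq_zero {ι R M : Type*} [Fintype ι] [DecidableEq ι]
    [Semiring R] [AddCommMonoid M] [Module R M] {A : ι → Type*} [∀ j, Fintype (A j)] (i : ι)
    (c : (∀ j, A j) → R) (hc : ∀ a a' : ∀ j, A j, (∀ j, j ≠ i → a j = a' j) → c a = c a')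
    (v : A i → M) (hv : ∑ b, v b = 0) :
    ∑ a, c a • v (a i) = 0 := by
  let e := Equiv.piSplitAt i A
  rw [← e.symm.sum_comp, Fintype.sum_prod_type, Finset.sum_comm]
  refine Finset.sum_eq_zero fun r _ => ?_
  rcases isEmpty_or_nonempty (A i) with _ | ⟨⟨b₀⟩⟩
  · exact Finset.sum_of_isEmpty _
  have hcoef : ∀ b, c (e.symm (b, r)) = c (e.symm (b₀, r)) := fun b =>
    hc _ _ fun j hj => by simp [e, Equiv.piSplitAt_symm_apply, hj]
  simp only [hcoef, show ∀ b, e.symm (b, r) i = b by simp [e, Equiv.piSplitAt_symm_apply]]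
  rw [← smul_sum, hv, smul_zero]

theorem sum_fderiv_eq_zero_of_sum_const {𝕜 κ E F : Type*} [NontriviallyNormedField 𝕜]
    [Fintype κ] [NormedAddCommGroup E] [NormedSpace 𝕜 E] [NormedAddCommGroup F]
    [NormedSpace 𝕜 F] {f : κ → E → F} {x : E} (hf : ∀ k, DifferentiableAt 𝕜 (f k) x)
    {C : F} (hsum : ∀ y, ∑ k, f k y = C) :
    ∑ k, fderiv 𝕜 (f k) x = 0 := by
  rw [← fderiv_fun_sum fun k _ => hf k, funext hsum, fderiv_const_apply]

theorem hasFDerivAt_mul_sub_mul_log {E : Type*} [NormedAddCommGroup E] [NormedSpace ℝ E]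
    {f : E → ℝ} {x : E} (hf : DifferentiableAt ℝ f x) (hx : 0 < f x) (k β : ℝ) :
    HasFDerivAt (fun y => f y * (k - β * Real.log (f y)))
      ((f x * (k - β * Real.log (f x))) • fderiv ℝ (fun y => Real.log (f y)) x
        - β • fderiv ℝ f x) x := by
  have hlog := hf.hasFDerivAt.log hx.ne'
  refine (hf.hasFDerivAt.mul ((hasFDerivAt_const k x).fun_sub (hlog.const_mul β))).congr_fderiv
    ?_
  have hfx : f x ≠ 0 := hx.ne'
  have hβ : f x * (β * (f x)⁻¹) = β := by field_simp
  have hk : f x * (k - β * Real.log (f x)) * (f x)⁻¹ = k - β * Real.log (f x) := by field_simp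
  rw [hlog.fderiv]
  simp only [smul_smul, zero_sub, smul_neg, hβ, hk]
  abel

theorem hasFDerivAt_sum_joint_action_mul_sub_mul_log {ι : Type*} [Fintype ι] [DecidableEq ι]
    {O A Ψ : ι → Type*} [∀ j, Fintype (A j)] [∀ j, NormedAddCommGroup (Ψ j)]
    [∀ j, NormedSpace ℝ (Ψ j)] (π : ∀ j, Ψ j → O j → A j → ℝ)
    (i : ι) (ψ : ∀ j, Ψ j) (o : ∀ j, O j)
    (hpos : ∀ b, 0 < π i (ψ i) (o i) b)
    (hdiff : ∀ b, DifferentiableAt ℝ (fun p => π i p (o i) b) (ψ i))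
    (hnorm : ∀ p, ∑ b, π i p (o i) b = 1) (c β : ℝ) (R : (∀ j, A j) → ℝ) :
    HasFDerivAt (fun ψi : Ψ i => ∑ a : ∀ j, A j,
        c * (∏ j, π j (Function.update ψ i ψi j) (o j) (a j)) *
          (R a - β * Real.log (π i ψi (o i) (a i))))
      (∑ a : ∀ j, A j, (c * (∏ j, π j (ψ j) (o j) (a j)) *
          (R a - β * Real.log (π i (ψ i) (o i) (a i)))) •
        fderiv ℝ (fun ψi : Ψ i => Real.log (π i ψi (o i) (a i))) (ψ i)) (ψ i) := by
  set others : (∀ j, A j) → ℝ := fun a => ∏ j ∈ univ.erase i, π j (ψ j) (o j) (a j)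
  have hterm : ∀ a : ∀ j, A j, HasFDerivAt
      (fun ψi : Ψ i => c * (∏ j, π j (Function.update ψ i ψi j) (o j) (a j)) *
        (R a - β * Real.log (π i ψi (o i) (a i))))
      ((c * (∏ j, π j (ψ j) (o j) (a j)) * (R a - β * Real.log (π i (ψ i) (o i) (a i)))) •
          fderiv ℝ (fun ψi : Ψ i => Real.log (π i ψi (o i) (a i))) (ψ i)
        - (c * others a * β) • fderiv ℝ (fun p => π i p (o i) (a i)) (ψ i)) (ψ i) := by
    intro a
    have h := (hasFDerivAt_mul_sub_mul_log (hdiff (a i)) (hpos (a i)) (R a) β).const_mul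
      (c * others a)
    simp only [Fintype.prod_apply_update (fun j p => π j p (o j) (a j)),
      ← mul_prod_erase univ (fun j => π j (ψ j) (o j) (a j)) (mem_univ i)]
    rw [smul_sub, smul_smul, smul_smul] at h
    refine (h.congr_fderiv ?_).congr_of_eventuallyEq (.of_forall fun ψi => ?_)
    · congr 2
      ring
    · ring
  refine (HasFDerivAt.fun_sum fun a _ => hterm a).congr_fderiv ?_
  have hothers : ∀ a a' : ∀ j, A j, (∀ j, j ≠ i → a j = a' j) →
      c * others a * β = c * others a' * β := fun a a' h => by
    simp only [others, prod_congr rfl fun j hj => congrArg _ (h j (ne_of_mem_erase hj))]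
  rw [sum_sub_distrib, Fintype.sum_smul_apply_eq_zero i _ hothers
    (fun b => fderiv ℝ (fun p => π i p (o i) b) (ψ i))
    (sum_fderiv_eq_zero_of_sum_const hdiff hnorm), sub_zero]

theorem sac_joint_actor_gradient_general
    {ι : Type*} [Fintype ι] [DecidableEq ι]
    {S : Type*} [Fintype S]
    {O : ι → Type*} [∀ j, Fintype (O j)]
    {A : ι → Type*} [∀ j, Fintype (A j)]
    {Ψ : ι → Type*} [∀ j, NormedAddCommGroup (Ψ j)] [∀ j, NormedSpace ℝ (Ψ j)]
    (π : ∀ j, Ψ j → O j → A j → ℝ)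
    (hpos : ∀ (j : ι) (ψj : Ψ j) (oj : O j) (aj : A j), 0 < π j ψj oj aj)
    (hdiff : ∀ (j : ι) (ψj : Ψ j) (oj : O j) (aj : A j),
      DifferentiableAt ℝ (fun p => π j p oj aj) ψj)
    (hnorm : ∀ (j : ι) (ψj : Ψ j) (oj : O j), ∑ aj : A j, π j ψj oj aj = 1)
    (d : S → ℝ)
    (E : S → (∀ j, O j) → ℝ)
    (i : ι) (ψ : ∀ j, Ψ j)
    (α α₁ α₂ : ℝ)
    (Q₁ Q₂ tg : (∀ j, O j) → (∀ j, A j) → ℝ)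
    (B : (∀ j, O j) → (∀ j, A j) → ℝ) :
    fderiv ℝ (fun ψi : Ψ i => ∑ s : S, ∑ o : (∀ j, O j), ∑ a : (∀ j, A j),
        d s * E s o * (∏ j, π j (Function.update ψ i ψi j) (o j) (a j)) *
          (α₁ * (Q₁ o a - α * Real.log (π i ψi (o i) (a i)) - B o a)
            + α₂ * ((Q₁ o a - tg o a) ^ 2 + (Q₂ o a - tg o a) ^ 2))) (ψ i)
      = ∑ s : S, ∑ o : (∀ j, O j), ∑ a : (∀ j, A j),
          (d s * E s o * (∏ j, π j (ψ j) (o j) (a j)) *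
            (α₁ * (Q₁ o a - α * Real.log (π i (ψ i) (o i) (a i)) - B o a)
              + α₂ * ((Q₁ o a - tg o a) ^ 2 + (Q₂ o a - tg o a) ^ 2))) •
            fderiv ℝ (fun ψi : Ψ i => Real.log (π i ψi (o i) (a i))) (ψ i) := by
  have hobs : ∀ s o, HasFDerivAt (fun ψi : Ψ i => ∑ a : (∀ j, A j),
      d s * E s o * (∏ j, π j (Function.update ψ i ψi j) (o j) (a j)) *
        (α₁ * (Q₁ o a - α * Real.log (π i ψi (o i) (a i)) - B o a)
          + α₂ * ((Q₁ o a - tg o a) ^ 2 + (Q₂ o a - tg o a) ^ 2)))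
      (∑ a : (∀ j, A j), (d s * E s o * (∏ j, π j (ψ j) (o j) (a j)) *
          (α₁ * (Q₁ o a - α * Real.log (π i (ψ i) (o i) (a i)) - B o a)
            + α₂ * ((Q₁ o a - tg o a) ^ 2 + (Q₂ o a - tg o a) ^ 2))) •
        fderiv ℝ (fun ψi : Ψ i => Real.log (π i ψi (o i) (a i))) (ψ i)) (ψ i) := by
    intro s o
    have h := hasFDerivAt_sum_joint_action_mul_sub_mul_log π i ψ o (hpos i (ψ i) (o i))
      (hdiff i (ψ i) (o i)) (fun p => hnorm i p (o i)) (d s * E s o) (α₁ * α)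
      (fun a => α₁ * (Q₁ o a - B o a) + α₂ * ((Q₁ o a - tg o a) ^ 2 + (Q₂ o a - tg o a) ^ 2))
    refine (h.congr_fderiv (sum_congr rfl fun a _ => ?_)).congr_of_eventuallyEq
      (.of_forall fun ψi => sum_congr rfl fun a _ => ?_)
    · congr 1
      ring
    · ring
  exact (HasFDerivAt.fun_sum fun s _ => HasFDerivAt.fun_sum fun o _ => hobs s o).fderiv

/-- SAC-based joint actor gradient (exact on-policy combination, Proposition 3, first
equation): with twin critics `Q₁, Q₂`, TD target `tg`, baseline `B` (independent of
agent `i`'s action) all fixed, and `δ_k = Q_k − tg`, the Fréchet derivative at `ψ i` of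
`J(ψⁱ) = ∑_{s,o,a} d·E·(∏ j πʲ)·[α₁(Q₁ − α·log πⁱ_{ψⁱ} − B) + α₂(δ₁² + δ₂²)]` equals
`∑_{s,o,a} d·E·(∏ j πʲ)·[α₁(Q₁ − α·log πⁱ_{ψ i} − B) + α₂(δ₁² + δ₂²)] • D(log πⁱ)|_{ψ i}`. -/
theorem sac_joint_actor_gradient
    {ι : Type*} [Fintype ι] [DecidableEq ι]
    {S : Type*} [Fintype S]
    {O : ι → Type*} [∀ j, Fintype (O j)]
    {A : ι → Type*} [∀ j, Fintype (A j)]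
    {Ψ : ι → Type*} [∀ j, NormedAddCommGroup (Ψ j)] [∀ j, NormedSpace ℝ (Ψ j)]
    (π : ∀ j, Ψ j → O j → A j → ℝ)
    (hpos : ∀ (j : ι) (ψj : Ψ j) (oj : O j) (aj : A j), 0 < π j ψj oj aj)
    (hdiff : ∀ (j : ι) (ψj : Ψ j) (oj : O j) (aj : A j),
      DifferentiableAt ℝ (fun p => π j p oj aj) ψj)
    (hnorm : ∀ (j : ι) (ψj : Ψ j) (oj : O j), ∑ aj : A j, π j ψj oj aj = 1)
    (d : S → ℝ) (hd : ∀ s, 0 ≤ d s)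
    (E : S → (∀ j, O j) → ℝ) (hE : ∀ s o, 0 ≤ E s o)
    (i : ι) (ψ : ∀ j, Ψ j)
    (α α₁ α₂ : ℝ)
    (Q₁ Q₂ tg : (∀ j, O j) → (∀ j, A j) → ℝ)
    (B : (∀ j, O j) → (∀ j, A j) → ℝ)
    (hB : ∀ (o : ∀ j, O j) (a a' : ∀ j, A j),
      (∀ j, j ≠ i → a j = a' j) → B o a = B o a') :
    fderiv ℝ (fun ψi : Ψ i => ∑ s : S, ∑ o : (∀ j, O j), ∑ a : (∀ j, A j),
        d s * E s o * (∏ j, π j (Function.update ψ i ψi j) (o j) (a j)) *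
          (α₁ * (Q₁ o a - α * Real.log (π i ψi (o i) (a i)) - B o a)
            + α₂ * ((Q₁ o a - tg o a) ^ 2 + (Q₂ o a - tg o a) ^ 2))) (ψ i)
      = ∑ s : S, ∑ o : (∀ j, O j), ∑ a : (∀ j, A j),
          (d s * E s o * (∏ j, π j (ψ j) (o j) (a j)) *
            (α₁ * (Q₁ o a - α * Real.log (π i (ψ i) (o i) (a i)) - B o a)
              + α₂ * ((Q₁ o a - tg o a) ^ 2 + (Q₂ o a - tg o a) ^ 2))) •
            fderiv ℝ (fun ψi : Ψ i => Real.log (π i ψi (o i) (a i))) (ψ i) :=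
  sac_joint_actor_gradient_general π hpos hdiff hnorm d E i ψ α α₁ α₂ Q₁ Q₂ tg B
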